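/- Let K be a compact subgroup of GL_n(ℝ) and let M ∈ M_n(ℝ) with M ∉ K (so that the orbit K·M = {kM : k ∈ K} is disjoint from K). Then there exists a polynomial function P : M_n(ℝ) → ℝ (a real polynomial in the n² matrix entries) such that P(kX) = P(X) for all k ∈ K and X ∈ M_n(ℝ), P vanishes identically on K, and P(M) ≠ 0. -/

import Mathlib

/-!
Stone–Weierstrass gives a polynomial `p` with `p ≤ 1/4` on `K` and `p ≥ 3/4` on the orbit `K·M`,
a compact set disjoint from `K`. Averaging `X ↦ p(kX)` over the Haar probability measure of `K`
yields a polynomial again (its coefficients are integrals of polynomials in the entries of `k`),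
now `K`-invariant; it is constant on `K`, with value at most `1/4`, and at least `3/4` at `M`.
Subtracting that constant gives `P`.
-/

open MeasureTheory MvPolynomial Topology

theorem Matrix.GeneralLinearGroup.isEmbedding_val {n R : Type*} [Fintype n] [DecidableEq n]
    [Field R] [TopologicalSpace R] [IsTopologicalDivisionRing R] :
    IsEmbedding (Units.val : GL n R → Matrix n n R) := by
  refine Units.isEmbedding_val_mk' (fun A hA => (continuousAt_matrix_inv A ?_).continuousWithinAt)
    fun u => (Matrix.coe_units_inv u).symm
  rw [Ring.inverse_eq_inv']
  exact continuousAt_inv₀ ((Matrix.isUnit_iff_isUnit_det A).mp hA).ne_zero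

theorem MvPolynomial.exists_separating_of_isCompact_of_disjoint {σ : Type*} {A B : Set (σ → ℝ)}
    (hA : IsCompact A) (hB : IsCompact B) (hAB : Disjoint A B) :
    ∃ p : MvPolynomial σ ℝ, (∀ x ∈ A, eval x p ≤ 1 / 4) ∧ ∀ x ∈ B, 3 / 4 ≤ eval x p := by
  have : CompactSpace ↥(A ∪ B) := isCompact_iff_compactSpace.mp (hA.union hB)
  obtain ⟨f, hfA, hfB, -⟩ := exists_continuous_zero_one_of_isClosed
    (hA.isClosed.preimage continuous_subtype_val) (hB.isClosed.preimage continuous_subtype_val)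
    (hAB.preimage ((↑) : ↥(A ∪ B) → σ → ℝ))
  let Ψ : MvPolynomial σ ℝ →ₐ[ℝ] C(↥(A ∪ B), ℝ) :=
    aeval fun i => ⟨fun x => (x : σ → ℝ) i, (continuous_apply i).comp continuous_subtype_val⟩
  have hΨ (p : MvPolynomial σ ℝ) (x : ↥(A ∪ B)) : Ψ p x = eval (x : σ → ℝ) p := by
    induction p using MvPolynomial.induction_on <;> simp_all [Ψ]
  have hsep : Ψ.range.SeparatesPoints := by
    intro x y hxy
    obtain ⟨i, hi⟩ := Function.ne_iff.mp (Subtype.coe_ne_coe.mpr hxy)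
    exact ⟨_, ⟨Ψ (X i), ⟨X i, rfl⟩, rfl⟩, by simpa [hΨ] using hi⟩
  obtain ⟨⟨_, p, rfl⟩, hp⟩ :=
    ContinuousMap.exists_mem_subalgebra_near_continuous_of_separatesPoints
      Ψ.range hsep f f.continuous (1 / 4) (by norm_num)
  have hp' (x : ↥(A ∪ B)) : |eval (x : σ → ℝ) p - f x| < 1 / 4 := by
    simpa only [AlgHom.toRingHom_eq_coe, RingHom.coe_coe, hΨ, Real.norm_eq_abs] using hp x
  refine ⟨p, fun x hx => ?_, fun x hx => ?_⟩
  · have h := hp' ⟨x, .inl hx⟩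
    rw [hfA (x := ⟨x, .inl hx⟩) hx, Pi.zero_apply, sub_zero] at h
    exact (abs_lt.mp h).2.le
  · have h := hp' ⟨x, .inr hx⟩
    rw [hfB (x := ⟨x, .inr hx⟩) hx, Pi.one_apply] at h
    linarith [(abs_lt.mp h).1]

theorem MvPolynomial.exists_eval_eq_integral_eval_map {𝕜 σ τ T : Type*} [RCLike 𝕜]
    [MeasurableSpace T] (μ : Measure T) (g : T → τ → 𝕜) (Q : MvPolynomial σ (MvPolynomial τ 𝕜))
    (hQ : ∀ d, Integrable (fun t => eval (g t) (Q.coeff d)) μ) :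
    ∃ P : MvPolynomial σ 𝕜, ∀ x, eval x P = ∫ t, eval x (map (eval (g t)) Q) ∂μ := by
  refine ⟨∑ d ∈ Q.support, monomial d (∫ t, eval (g t) (Q.coeff d) ∂μ), fun x => ?_⟩
  simp_rw [eval_map, eval₂_eq]
  rw [integral_finsetSum _ fun d _ => (hQ d).mul_const _]
  simp [eval_monomial, integral_mul_const, Finsupp.prod]

section LeftMul

variable {R m n : Type*} [CommSemiring R] [Fintype m]

noncomputable def MvPolynomial.leftMulSubst (p : MvPolynomial (m × n) R) :
    MvPolynomial (m × n) (MvPolynomial (m × m) R) :=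
  aeval (fun q => ∑ l, C (X (q.1, l)) * X (l, q.2)) p

theorem MvPolynomial.eval_map_eval_leftMulSubst (p : MvPolynomial (m × n) R) (A : Matrix m m R)
    (B : Matrix m n R) :
    eval (fun q => B q.1 q.2) (map (eval fun q => A q.1 q.2) (leftMulSubst p)) =
      eval (fun q => (A * B) q.1 q.2) p := by
  induction p using MvPolynomial.induction_on with
  | C a => simp [leftMulSubst]
  | add p q hp hq => simp_all [leftMulSubst]
  | mul_X p q hp =>
    obtain ⟨i, j⟩ := q
    simp_all [leftMulSubst, Matrix.mul_apply]

end LeftMul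

section Averaging

variable {m n : Type*} [Fintype m]

theorem MvPolynomial.exists_eval_eq_integral_eval_mul {𝕜 T : Type*} [RCLike 𝕜]
    [TopologicalSpace T] [CompactSpace T] [MeasurableSpace T] [OpensMeasurableSpace T]
    (μ : Measure T) [IsFiniteMeasure μ] {ρ : T → Matrix m m 𝕜} (hρ : Continuous ρ)
    (p : MvPolynomial (m × n) 𝕜) :
    ∃ P : MvPolynomial (m × n) 𝕜, ∀ B : Matrix m n 𝕜,
      eval (fun q => B q.1 q.2) P = ∫ t, eval (fun q => (ρ t * B) q.1 q.2) p ∂μ := by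
  have hρ' : Continuous fun t (q : m × m) => ρ t q.1 q.2 :=
    continuous_pi fun q => hρ.matrix_elem q.1 q.2
  obtain ⟨P, hP⟩ := exists_eval_eq_integral_eval_map μ _ (leftMulSubst p) fun d =>
    ((continuous_eval _).comp hρ').integrable_of_hasCompactSupport (.of_compactSpace _)
  exact ⟨P, fun B => by simp_rw [hP, eval_map_eval_leftMulSubst]⟩

theorem MvPolynomial.exists_invariant_average [DecidableEq m] {G : Type*} [Group G]
    [TopologicalSpace G] [IsTopologicalGroup G] [CompactSpace G] [MeasurableSpace G]
    [BorelSpace G] {ρ : G →* Matrix m m ℝ} (hρ : Continuous ρ) (p : MvPolynomial (m × n) ℝ) :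
    ∃ P : MvPolynomial (m × n) ℝ,
      (∀ g (B : Matrix m n ℝ),
        eval (fun q => (ρ g * B) q.1 q.2) P = eval (fun q => B q.1 q.2) P) ∧
      ∀ (B : Matrix m n ℝ) (a : ℝ),
        ((∀ g, eval (fun q => (ρ g * B) q.1 q.2) p ≤ a) → eval (fun q => B q.1 q.2) P ≤ a) ∧
        ((∀ g, a ≤ eval (fun q => (ρ g * B) q.1 q.2) p) → a ≤ eval (fun q => B q.1 q.2) P) := by
  let μ : Measure G := Measure.haarMeasure ⊤
  have : IsProbabilityMeasure μ :=
    ⟨by simpa using Measure.haarMeasure_self (K₀ := (⊤ : TopologicalSpace.PositiveCompacts G))⟩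
  -- Averaging `p (ρ g⁻¹ * B)` rather than `p (ρ g * B)` lets left invariance of `μ` do the work.
  obtain ⟨P, hP⟩ :=
    exists_eval_eq_integral_eval_mul μ (ρ := fun g => ρ g⁻¹) (hρ.comp continuous_inv) p
  have hintegrable (B : Matrix m n ℝ) :
      Integrable (fun g => eval (fun q => (ρ g⁻¹ * B) q.1 q.2) p) μ :=
    ((continuous_eval p).comp (continuous_pi fun q => ((hρ.comp continuous_inv).matrix_mul
      continuous_const).matrix_elem q.1 q.2)).integrable_of_hasCompactSupport (.of_compactSpace _)
  refine ⟨P, fun h B => ?_, fun B a => ⟨fun hle => ?_, fun hge => ?_⟩⟩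
  · calc eval (fun q => (ρ h * B) q.1 q.2) P
          = ∫ g, eval (fun q => (ρ (h⁻¹ * g)⁻¹ * B) q.1 q.2) p ∂μ := by
            simp [hP, Matrix.mul_assoc]
      _ = eval (fun q => B q.1 q.2) P := by
            rw [integral_mul_left_eq_self
              (fun g => eval (fun q => (ρ g⁻¹ * B) q.1 q.2) p) h⁻¹, hP]
  · calc eval (fun q => B q.1 q.2) P ≤ ∫ _, a ∂μ := by
          rw [hP]; exact integral_mono (hintegrable B) (integrable_const a) fun g => hle g⁻¹
      _ = a := by simp
  · calc a = ∫ _, a ∂μ := by simp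
      _ ≤ eval (fun q => B q.1 q.2) P := by
          rw [hP]; exact integral_mono (integrable_const a) (hintegrable B) fun g => hge g⁻¹

end Averaging

/-- Let `K` be a compact subgroup of `GL_n(ℝ)` and `M ∈ M_n(ℝ)` a matrix not
lying in `K`.  Then there is a real polynomial `P` in the `n²` matrix entries which is invariant
under the left action of `K` on `M_n(ℝ)`, vanishes identically on `K`, and does not vanish
at `M`. -/
theorem invariant_separating_polynomial
    (n : ℕ) (K : Subgroup (GL (Fin n) ℝ))
    (hcomp : IsCompact
      ((fun g : GL (Fin n) ℝ => (g : Matrix (Fin n) (Fin n) ℝ)) '' (K : Set (GL (Fin n) ℝ))))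
    (M : Matrix (Fin n) (Fin n) ℝ)
    (hM : M ∉ (fun g : GL (Fin n) ℝ => (g : Matrix (Fin n) (Fin n) ℝ)) ''
      (K : Set (GL (Fin n) ℝ))) :
    ∃ P : MvPolynomial (Fin n × Fin n) ℝ,
      (∀ k ∈ K, ∀ X : Matrix (Fin n) (Fin n) ℝ,
        MvPolynomial.eval
          (fun p : Fin n × Fin n => ((k : Matrix (Fin n) (Fin n) ℝ) * X) p.1 p.2) P =
        MvPolynomial.eval (fun p : Fin n × Fin n => X p.1 p.2) P) ∧
      (∀ k ∈ K,
        MvPolynomial.eval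
          (fun p : Fin n × Fin n => (k : Matrix (Fin n) (Fin n) ℝ) p.1 p.2) P = 0) ∧
      MvPolynomial.eval (fun p : Fin n × Fin n => M p.1 p.2) P ≠ 0 := by
  have : CompactSpace K := isCompact_iff_compactSpace.mp
    (Matrix.GeneralLinearGroup.isEmbedding_val.isCompact_iff.mpr hcomp)
  borelize ↥K
  let ρ : K →* Matrix (Fin n) (Fin n) ℝ := (Units.coeHom _).comp K.subtype
  have hρ : Continuous ρ := Units.continuous_val.comp continuous_subtype_val
  have hentries :
      Continuous fun (A : Matrix (Fin n) (Fin n) ℝ) (q : Fin n × Fin n) => A q.1 q.2 :=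
    continuous_pi fun q => continuous_id.matrix_elem q.1 q.2
  have horbit : Disjoint (Set.range fun k => fun q : Fin n × Fin n => ρ k q.1 q.2)
      (Set.range fun k => fun q : Fin n × Fin n => (ρ k * M) q.1 q.2) := by
    refine Set.disjoint_range_iff.mpr fun k k' h => hM ⟨k'⁻¹ * k, (k'⁻¹ * k).2, ?_⟩
    have h' : ρ k = ρ k' * M := Matrix.ext fun i j => congrFun h (i, j)
    change ρ (k'⁻¹ * k) = M
    rw [map_mul, h', ← mul_assoc, ← map_mul, inv_mul_cancel, map_one, one_mul]
  obtain ⟨p, hpK, hpKM⟩ := exists_separating_of_isCompact_of_disjoint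
    (isCompact_range (hentries.comp hρ))
    (isCompact_range (hentries.comp (hρ.matrix_mul continuous_const))) horbit
  obtain ⟨P, hPinv, hPbound⟩ := exists_invariant_average hρ p
  have hP1 : eval (fun q => (1 : Matrix (Fin n) (Fin n) ℝ) q.1 q.2) P ≤ 1 / 4 :=
    (hPbound 1 _).1 fun k => by simpa using hpK _ ⟨k, rfl⟩
  have hPM : 3 / 4 ≤ eval (fun q => M q.1 q.2) P :=
    (hPbound M _).2 fun k => hpKM _ ⟨k, rfl⟩
  refine ⟨P - C (eval (fun q => (1 : Matrix (Fin n) (Fin n) ℝ) q.1 q.2) P),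
    fun k hk B => ?_, fun k hk => ?_, ?_⟩
  · simp only [map_sub, eval_C, sub_left_inj]
    exact hPinv ⟨k, hk⟩ B
  · have hk1 := hPinv ⟨k, hk⟩ 1
    rw [mul_one] at hk1
    simp only [map_sub, eval_C]
    exact sub_eq_zero.mpr hk1
  · simp only [map_sub, eval_C]
    linarith
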